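/- Let m ≥ 1, let M, N ⊆ [m] with M ⊊ [m] and M ⊄ N, and let D = aΔ_M^c + cΔ_N ⊆ E^m. Then the binary Gray image Φ(C^R_D) is an F₂-linear code of length (2^m−2^{|M|})·2^{|N|+1}, with 2^m codewords (F₂-dimension m), with minimum distance (2^m−2^{|M|})·2^{|N|−1}, and every nonzero codeword has Hamming weight in {(2^m−2^{|M|})·2^{|N|}, 2^{m+|N|−1}, (2^m−2^{|M|})·2^{|N|−1}}. Moreover, if |M|+|N| ≥ 3, then Φ(C^R_D) is self-orthogonal. -/

import Mathlib

open Finset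

/-- The simplicial complex `Δ_M ⊆ 𝔽₂^m` generated by `M ⊆ [m]`:
all vectors whose support is contained in `M`. -/
def deltaC {m : ℕ} (M : Finset (Fin m)) : Finset (Fin m → ZMod 2) :=
  Finset.univ.filter (fun w => ∀ i, w i ≠ 0 → i ∈ M)

/-- Dot product over `𝔽₂`. -/
def dotp {m : ℕ} (x y : Fin m → ZMod 2) : ZMod 2 := ∑ i, x i * y i

/-- The Gray map on a single element `a·s + c·t ↔ (s, t)` of `E = 𝔽₂ × 𝔽₂`:
`Φ(as + ct) = (t, s + t)`. -/
def grayPair (e : ZMod 2 × ZMod 2) : Fin 2 → ZMod 2 := ![e.2, e.1 + e.2]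

/-- The left codeword `c^L_D(v)` for `v = aα + cβ ↔ (α, β)`:
its coordinate at `d = (t₁, t₂) ∈ D` is `a(α·t₁) + c(β·t₁) ↔ (α·t₁, β·t₁)`. -/
def cwL {m : ℕ} (Ds : Finset ((Fin m → ZMod 2) × (Fin m → ZMod 2)))
    (v : (Fin m → ZMod 2) × (Fin m → ZMod 2)) :
    {d // d ∈ Ds} → ZMod 2 × ZMod 2 :=
  fun d => (dotp v.1 d.1.1, dotp v.2 d.1.1)

/-- The Gray image `Φ(c^L_D(v)) ∈ 𝔽₂^{2|D|}` of the left codeword `c^L_D(v)`;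
its Hamming weight (`hammingNorm`) is the Lee weight of `c^L_D(v)`. -/
def gcwL {m : ℕ} (Ds : Finset ((Fin m → ZMod 2) × (Fin m → ZMod 2)))
    (v : (Fin m → ZMod 2) × (Fin m → ZMod 2)) :
    {d // d ∈ Ds} × Fin 2 → ZMod 2 :=
  fun x => grayPair (cwL Ds v x.1) x.2

/-- The right codeword `c^R_D(v)` for `v = aα + cβ ↔ (α, β)`:
its coordinate at `d = (t₁, t₂) ∈ D` is `a(t₁·α) + c(t₂·α) ↔ (t₁·α, t₂·α)`. -/
def cwR {m : ℕ} (Ds : Finset ((Fin m → ZMod 2) × (Fin m → ZMod 2)))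
    (v : (Fin m → ZMod 2) × (Fin m → ZMod 2)) :
    {d // d ∈ Ds} → ZMod 2 × ZMod 2 :=
  fun d => (dotp d.1.1 v.1, dotp d.1.2 v.1)

/-- The Gray image `Φ(c^R_D(v)) ∈ 𝔽₂^{2|D|}` of the right codeword `c^R_D(v)`;
its Hamming weight (`hammingNorm`) is the Lee weight of `c^R_D(v)`. -/
def gcwR {m : ℕ} (Ds : Finset ((Fin m → ZMod 2) × (Fin m → ZMod 2)))
    (v : (Fin m → ZMod 2) × (Fin m → ZMod 2)) :
    {d // d ∈ Ds} × Fin 2 → ZMod 2 :=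
  fun x => grayPair (cwR Ds v x.1) x.2

/-!
Writing `v = aα + cβ`, the coordinate of `Φ(c^R_D(v))` at `(t₁, t₂)` is `(t₂·α, t₁·α + t₂·α)`,
so only `α` matters and its Lee weight is `[t₂·α ≠ 0] + [t₁·α ≠ t₂·α]`. On `Δ_S` the functional
`t ↦ t·α` is either identically zero (when `α` vanishes on `S`) or balanced, since flipping a
coordinate `i ∈ S` with `α i = 1` swaps its two fibres. If `α` meets `N`, the sum over `t₂ ∈ Δ_N`
is balanced and the weight is `|Δ_M^c| |Δ_N|`; otherwise the weight is
`2^|N| · #{t ∉ Δ_M | t·α = 1}`, which is `2^(m-1) - 2^(|M|-1)` or `2^(m-1)` according as `α` meets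
`M` or not.

For self-orthogonality, the inner product of two Gray images expands into sums over `Δ_N` and
`Δ_M^c` of monomials of degree at most two in the coordinates of `t`. Such a sum over `Δ_S` vanishes
as soon as `|S|` exceeds the number of coordinates involved, again by flipping a free coordinate;
the factor `|Δ_N| = 2^|N|` kills the remaining term when `N ≠ ∅`.
-/

open Function

lemma hammingNorm_prod_eq_sum {ι κ β : Type*} [Fintype ι] [Fintype κ] [Zero β] [DecidableEq β]
    (f : ι × κ → β) : hammingNorm f = ∑ i, hammingNorm fun k => f (i, k) := by
  simp only [hammingNorm, card_filter, Fintype.sum_prod_type]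

lemma card_filter_compl_add_card_filter {α : Type*} [Fintype α] [DecidableEq α] (s : Finset α)
    (p : α → Prop) [DecidablePred p] : #{t ∈ sᶜ | p t} + #{t ∈ s | p t} = #{t | p t} := by
  simp only [card_filter]
  exact sum_compl_add_sum s _

lemma hammingNorm_grayPair (e : ZMod 2 × ZMod 2) :
    hammingNorm (grayPair e) = (if e.2 ≠ 0 then 1 else 0) + (if e.1 ≠ e.2 then 1 else 0) := by
  revert e; decide

lemma grayPair_add (a b c d : ZMod 2) :
    grayPair (a + b, c + d) = grayPair (a, c) + grayPair (b, d) := by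
  revert a b c d; decide

lemma grayPair_mul_add_grayPair_mul (a b c d : ZMod 2) :
    grayPair (a, b) 0 * grayPair (c, d) 0 + grayPair (a, b) 1 * grayPair (c, d) 1
      = a * c + a * d + b * c := by
  revert a b c d; decide

section SimplicialComplex

variable {m : ℕ}

lemma mem_deltaC {S : Finset (Fin m)} {w : Fin m → ZMod 2} :
    w ∈ deltaC S ↔ ∀ i, w i ≠ 0 → i ∈ S := by
  simp [deltaC]

lemma deltaC_univ : deltaC (univ : Finset (Fin m)) = univ := by
  ext w; simp [mem_deltaC]

lemma card_deltaC (S : Finset (Fin m)) : #(deltaC S) = 2 ^ #S := by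
  have : deltaC S = Fintype.piFinset fun i => if i ∈ S then univ else {0} := by
    ext w
    simp only [mem_deltaC, Fintype.mem_piFinset]
    refine forall_congr' fun i => ?_
    by_cases hi : i ∈ S <;> simp [hi]
  rw [this, Fintype.card_piFinset]
  simp [apply_ite, prod_ite_mem]

lemma card_compl_deltaC (S : Finset (Fin m)) : #(deltaC S)ᶜ = 2 ^ m - 2 ^ #S := by
  simp [card_compl, card_deltaC]

lemma add_single_mem_deltaC {S : Finset (Fin m)} {t : Fin m → ZMod 2} {j : Fin m}
    (ht : t ∈ deltaC S) (hj : j ∈ S) : t + Pi.single j 1 ∈ deltaC S := by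
  rw [mem_deltaC] at ht ⊢
  intro i hi
  by_cases hij : i = j
  · exact hij ▸ hj
  · exact ht i (by simpa [Pi.single_eq_of_ne hij] using hi)

lemma add_single_add_single (t : Fin m → ZMod 2) (j : Fin m) :
    t + Pi.single j 1 + Pi.single j 1 = t := by
  rw [add_assoc, ← Pi.single_add, CharTwo.add_self_eq_zero, Pi.single_zero, add_zero]

lemma sum_deltaC_eq_zero_of_dependsOn {S I : Finset (Fin m)} (hIS : #I < #S)
    {f : (Fin m → ZMod 2) → ZMod 2} (hf : DependsOn f I) : ∑ t ∈ deltaC S, f t = 0 := by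
  obtain ⟨j, hjS, hjI⟩ := exists_mem_notMem_of_card_lt_card hIS
  have hflip (t : Fin m → ZMod 2) : f (t + Pi.single j 1) = f t :=
    hf fun i hi => by simp [Pi.single_eq_of_ne (ne_of_mem_of_not_mem hi hjI)]
  refine sum_involution (fun t _ => t + Pi.single j 1)
    (fun t _ => by rw [hflip, CharTwo.add_self_eq_zero]) (fun t _ _ h => ?_)
    (fun t ht => add_single_mem_deltaC ht hjS) (fun t _ => add_single_add_single t j)
  simpa using congrFun h j

lemma sum_compl_deltaC_eq_zero_of_dependsOn {S I : Finset (Fin m)} (hIS : #I < #S)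
    (hIm : #I < m) {f : (Fin m → ZMod 2) → ZMod 2} (hf : DependsOn f I) :
    ∑ t ∈ (deltaC S)ᶜ, f t = 0 := by
  have hsum := sum_compl_add_sum (deltaC S) f
  rw [sum_deltaC_eq_zero_of_dependsOn hIS hf, add_zero, ← deltaC_univ,
    sum_deltaC_eq_zero_of_dependsOn (by simpa using hIm) hf] at hsum
  exact hsum

end SimplicialComplex

section DotProduct

variable {m : ℕ}

lemma dotp_add_right (t x y : Fin m → ZMod 2) : dotp t (x + y) = dotp t x + dotp t y := by
  simp [dotp, mul_add, sum_add_distrib]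

lemma dotp_add_single_left (t α : Fin m → ZMod 2) (i : Fin m) :
    dotp (t + Pi.single i 1) α = dotp t α + α i := by
  simp [dotp, add_mul, sum_add_distrib, Pi.single_apply]

lemma dotp_eq_zero_of_mem_deltaC {S : Finset (Fin m)} {t α : Fin m → ZMod 2}
    (ht : t ∈ deltaC S) (hα : ∀ i ∈ S, α i = 0) : dotp t α = 0 := by
  refine sum_eq_zero fun i _ => ?_
  by_cases hti : t i = 0
  · simp [hti]
  · simp [hα i (mem_deltaC.mp ht i hti)]

lemma two_mul_card_filter_dotp_ne_zero {S : Finset (Fin m)} {α : Fin m → ZMod 2} {i : Fin m}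
    (hi : i ∈ S) (hαi : α i ≠ 0) :
    2 * #{t ∈ deltaC S | dotp t α ≠ 0} = 2 ^ #S := by
  have hαi : α i = 1 := by revert hαi; generalize α i = x; revert x; decide
  have hflip : #{t ∈ deltaC S | dotp t α ≠ 0} = #{t ∈ deltaC S | ¬dotp t α ≠ 0} := by
    refine card_nbij' (· + Pi.single i 1) (· + Pi.single i 1) ?_ ?_
      (fun t _ => add_single_add_single t i) (fun t _ => add_single_add_single t i) <;>
    · intro t ht
      simp only [coe_filter, Set.mem_ofPred_eq, dotp_add_single_left, hαi] at ht ⊢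
      refine ⟨add_single_mem_deltaC ht.1 hi, ?_⟩
      have h := ht.2
      generalize dotp t α = x at h ⊢
      revert x; decide
  rw [← card_deltaC, ← card_filter_add_card_filter_not (s := deltaC S) (fun t => dotp t α ≠ 0),
    ← hflip, two_mul]

lemma card_filter_dotp_ne_zero_eq_zero {S : Finset (Fin m)} {α : Fin m → ZMod 2}
    (hα : ∀ i ∈ S, α i = 0) : #{t ∈ deltaC S | dotp t α ≠ 0} = 0 := by
  simpa using fun t ht => dotp_eq_zero_of_mem_deltaC ht hα

lemma two_mul_card_filter_compl_deltaC_add (M : Finset (Fin m)) {α : Fin m → ZMod 2}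
    (hα : α ≠ 0) :
    2 * #{t ∈ (deltaC M)ᶜ | dotp t α ≠ 0} + 2 * #{t ∈ deltaC M | dotp t α ≠ 0} = 2 ^ m := by
  obtain ⟨i, hi⟩ := Function.ne_iff.mp hα
  have huniv := two_mul_card_filter_dotp_ne_zero (S := univ) (mem_univ i) hi
  rw [deltaC_univ, card_univ, Fintype.card_fin] at huniv
  rw [← mul_add, card_filter_compl_add_card_filter, huniv]

lemma sum_dotp (T : Finset (Fin m → ZMod 2)) (α : Fin m → ZMod 2) :
    ∑ t ∈ T, dotp t α = ∑ i, (∑ t ∈ T, t i) * α i := by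
  simp only [dotp, sum_mul]
  exact sum_comm

lemma sum_dotp_mul_dotp (T : Finset (Fin m → ZMod 2)) (α β : Fin m → ZMod 2) :
    ∑ t ∈ T, dotp t α * dotp t β = ∑ i, ∑ j, (∑ t ∈ T, t i * t j) * (α i * β j) := by
  simp only [dotp, sum_mul_sum]
  simp only [sum_mul]
  conv_lhs => rw [sum_comm]
  refine sum_congr rfl fun i _ => ?_
  conv_lhs => rw [sum_comm]
  exact sum_congr rfl fun j _ => sum_congr rfl fun t _ => by ring

lemma dependsOn_apply (i : Fin m) :
    DependsOn (fun t : Fin m → ZMod 2 => t i) (({i} : Finset (Fin m)) : Set (Fin m)) :=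
  fun _ _ h => h i (by simp)

lemma dependsOn_apply_mul_apply (i j : Fin m) :
    DependsOn (fun t : Fin m → ZMod 2 => t i * t j) (({i, j} : Finset (Fin m)) : Set (Fin m)) :=
  fun _ _ h => congrArg₂ (· * ·) (h i (by simp)) (h j (by simp))

end DotProduct

section GrayImage

variable {m : ℕ}

lemma gcwR_add (Ds : Finset ((Fin m → ZMod 2) × (Fin m → ZMod 2)))
    (v w : (Fin m → ZMod 2) × (Fin m → ZMod 2)) :
    gcwR Ds (v + w) = gcwR Ds v + gcwR Ds w := by
  funext x
  simp only [gcwR, cwR, Prod.fst_add, dotp_add_right, Pi.add_apply]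
  rw [grayPair_add]
  rfl

lemma gcwR_eq_zero_of_fst_eq_zero (Ds : Finset ((Fin m → ZMod 2) × (Fin m → ZMod 2)))
    {v : (Fin m → ZMod 2) × (Fin m → ZMod 2)} (hv : v.1 = 0) : gcwR Ds v = 0 := by
  funext x
  simp only [gcwR, cwR, hv, dotp, mul_zero, sum_const_zero, Pi.zero_apply]
  exact congrFun (by decide : grayPair 0 = 0) x.2

lemma card_image_gcwR (Ds : Finset ((Fin m → ZMod 2) × (Fin m → ZMod 2)))
    (h : ∀ v : (Fin m → ZMod 2) × (Fin m → ZMod 2), v.1 ≠ 0 → gcwR Ds v ≠ 0) :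
    #(univ.image (gcwR Ds)) = 2 ^ m := by
  have himage : univ.image (gcwR Ds) = univ.image fun α => gcwR Ds (α, 0) := by
    ext y
    simp only [mem_image, mem_univ, true_and]
    exact ⟨fun ⟨v, hv⟩ => ⟨v.1, hv⟩, fun ⟨α, hα⟩ => ⟨(α, 0), hα⟩⟩
  let φ : (Fin m → ZMod 2) →+ ({d // d ∈ Ds} × Fin 2 → ZMod 2) :=
    AddMonoidHom.mk' (fun α => gcwR Ds (α, 0)) fun α β => by
      simpa using gcwR_add Ds (α, 0) (β, 0)
  have hinj : Injective φ :=
    (injective_iff_map_eq_zero φ).mpr fun α hα => by_contra fun hα0 => h (α, 0) hα0 hα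
  rw [himage]
  exact (card_image_of_injective univ hinj).trans (by simp)

lemma hammingNorm_gcwR_product (A B : Finset (Fin m → ZMod 2))
    (v : (Fin m → ZMod 2) × (Fin m → ZMod 2)) :
    hammingNorm (gcwR (A ×ˢ B) v) = ∑ t₁ ∈ A, ∑ t₂ ∈ B,
      ((if dotp t₂ v.1 ≠ 0 then 1 else 0) + (if dotp t₁ v.1 ≠ dotp t₂ v.1 then 1 else 0)) := by
  rw [hammingNorm_prod_eq_sum, ← sum_product']
  simp only [gcwR, cwR, hammingNorm_grayPair]
  exact sum_coe_sort (A ×ˢ B) fun d =>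
    (if dotp d.2 v.1 ≠ 0 then 1 else 0) + (if dotp d.1 v.1 ≠ dotp d.2 v.1 then 1 else 0)

lemma sum_gcwR_mul_gcwR_product (A B : Finset (Fin m → ZMod 2))
    (v w : (Fin m → ZMod 2) × (Fin m → ZMod 2)) :
    ∑ i, gcwR (A ×ˢ B) v i * gcwR (A ×ˢ B) w i
      = #B * ∑ t ∈ A, dotp t v.1 * dotp t w.1 + (∑ t ∈ A, dotp t v.1) * ∑ t ∈ B, dotp t w.1
        + (∑ t ∈ B, dotp t v.1) * ∑ t ∈ A, dotp t w.1 := by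
  rw [Fintype.sum_prod_type]
  simp only [Fin.sum_univ_two, gcwR, cwR, grayPair_mul_add_grayPair_mul]
  rw [sum_coe_sort (A ×ˢ B) fun d => dotp d.1 v.1 * dotp d.1 w.1 + dotp d.1 v.1 * dotp d.2 w.1
    + dotp d.2 v.1 * dotp d.1 w.1, sum_product, sum_mul_sum, sum_mul_sum B A, sum_comm (s := B)]
  simp only [sum_add_distrib, sum_const, nsmul_eq_mul, mul_sum]

variable {A B : Finset (Fin m → ZMod 2)} {v : (Fin m → ZMod 2) × (Fin m → ZMod 2)}

/-- For fixed `t₁`, the term of `t₂` is `2 [t₂·α ≠ 0]` if `t₁·α = 0` and `1` if `t₁·α = 1`. -/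
lemma hammingNorm_gcwR_product_of_balanced (hB : 2 * #{t ∈ B | dotp t v.1 ≠ 0} = #B) :
    hammingNorm (gcwR (A ×ˢ B) v) = #A * #B := by
  rw [hammingNorm_gcwR_product, ← smul_eq_mul, ← sum_const]
  refine sum_congr rfl fun t₁ _ => ?_
  rcases (by decide : ∀ x : ZMod 2, x = 0 ∨ x = 1) (dotp t₁ v.1) with h | h <;> rw [h]
  · simp_rw [ne_comm (a := (0 : ZMod 2)), ← two_mul]
    rw [← mul_sum, sum_boole, Nat.cast_id, hB]
  · have hone : ∀ x : ZMod 2, ((if x ≠ 0 then 1 else 0) + if 1 ≠ x then 1 else 0 : ℕ) = 1 := by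
      decide
    rw [sum_congr rfl fun t₂ _ => hone (dotp t₂ v.1), sum_const, smul_eq_mul, mul_one]

lemma hammingNorm_gcwR_product_of_forall_eq_zero (hB : ∀ t ∈ B, dotp t v.1 = 0) :
    hammingNorm (gcwR (A ×ˢ B) v) = #B * #{t ∈ A | dotp t v.1 ≠ 0} := by
  rw [hammingNorm_gcwR_product, card_filter, mul_sum]
  refine sum_congr rfl fun t₁ _ => ?_
  rw [sum_congr rfl fun t₂ ht₂ => by rw [hB t₂ ht₂], sum_const, smul_eq_mul]
  simp

end GrayImage

lemma two_pow_sub_two_pow_le_mul {a m : ℕ} (n : ℕ) (ha : a ≠ 0) (ham : a < m) :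
    2 ^ (m + n - 1) - 2 ^ (a + n - 1) ≤ (2 ^ m - 2 ^ a) * 2 ^ n := by
  have hlt : 2 ^ (a + n - 1) < 2 ^ (m + n - 1) := Nat.pow_lt_pow_right one_lt_two (by omega)
  rw [Nat.sub_mul, ← pow_add, ← pow_add, ← mul_pow_sub_one (by omega : m + n ≠ 0),
    ← mul_pow_sub_one (by omega : a + n ≠ 0)]
  omega

section Code

variable {m : ℕ} (M N : Finset (Fin m)) {v : (Fin m → ZMod 2) × (Fin m → ZMod 2)}

lemma hammingNorm_gcwR_of_mem_N {i : Fin m} (hi : i ∈ N) (hvi : v.1 i ≠ 0) :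
    hammingNorm (gcwR ((deltaC M)ᶜ ×ˢ deltaC N) v) = (2 ^ m - 2 ^ #M) * 2 ^ #N := by
  rw [hammingNorm_gcwR_product_of_balanced
      (by rw [card_deltaC]; exact two_mul_card_filter_dotp_ne_zero hi hvi),
    card_compl_deltaC, card_deltaC]

lemma hammingNorm_gcwR_of_mem_M {i : Fin m} (hi : i ∈ M) (hvi : v.1 i ≠ 0)
    (hN : ∀ i ∈ N, v.1 i = 0) :
    hammingNorm (gcwR ((deltaC M)ᶜ ×ˢ deltaC N) v)
      = 2 ^ (m + #N - 1) - 2 ^ (#M + #N - 1) := by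
  have hsplit := two_mul_card_filter_compl_deltaC_add M (Function.ne_iff.mpr ⟨i, hvi⟩)
  rw [two_mul_card_filter_dotp_ne_zero hi hvi] at hsplit
  have hM : #M ≠ 0 := card_ne_zero.mpr ⟨i, hi⟩
  have hm : m ≠ 0 := (Fin.pos i).ne'
  rw [hammingNorm_gcwR_product_of_forall_eq_zero fun t ht => dotp_eq_zero_of_mem_deltaC ht hN,
    card_deltaC, show #{t ∈ (deltaC M)ᶜ | dotp t v.1 ≠ 0} = 2 ^ (m - 1) - 2 ^ (#M - 1) by
      rw [← mul_pow_sub_one hm, ← mul_pow_sub_one hM] at hsplit; omega,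
    Nat.mul_sub, ← pow_add, ← pow_add]
  congr 2 <;> omega

lemma hammingNorm_gcwR_of_forall (hv : v.1 ≠ 0) (hM : ∀ i ∈ M, v.1 i = 0)
    (hN : ∀ i ∈ N, v.1 i = 0) :
    hammingNorm (gcwR ((deltaC M)ᶜ ×ˢ deltaC N) v) = 2 ^ (m + #N - 1) := by
  have hsplit := two_mul_card_filter_compl_deltaC_add M hv
  rw [card_filter_dotp_ne_zero_eq_zero hM] at hsplit
  obtain ⟨i, -⟩ := Function.ne_iff.mp hv
  have hm : m ≠ 0 := (Fin.pos i).ne'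
  rw [hammingNorm_gcwR_product_of_forall_eq_zero fun t ht => dotp_eq_zero_of_mem_deltaC ht hN,
    card_deltaC, show #{t ∈ (deltaC M)ᶜ | dotp t v.1 ≠ 0} = 2 ^ (m - 1) by
      rw [← mul_pow_sub_one hm] at hsplit; omega,
    ← pow_add]
  congr 1; omega

lemma hammingNorm_gcwR_cases (hv : v.1 ≠ 0) :
    hammingNorm (gcwR ((deltaC M)ᶜ ×ˢ deltaC N) v) = (2 ^ m - 2 ^ #M) * 2 ^ #N ∨
    hammingNorm (gcwR ((deltaC M)ᶜ ×ˢ deltaC N) v) = 2 ^ (m + #N - 1) ∨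
    hammingNorm (gcwR ((deltaC M)ᶜ ×ˢ deltaC N) v)
      = 2 ^ (m + #N - 1) - 2 ^ (#M + #N - 1) := by
  by_cases hN : ∃ i ∈ N, v.1 i ≠ 0
  · obtain ⟨i, hi, hvi⟩ := hN
    exact Or.inl (hammingNorm_gcwR_of_mem_N M N hi hvi)
  push Not at hN
  by_cases hM : ∃ i ∈ M, v.1 i ≠ 0
  · obtain ⟨i, hi, hvi⟩ := hM
    exact Or.inr (Or.inr (hammingNorm_gcwR_of_mem_M M N hi hvi hN))
  push Not at hM
  exact Or.inr (Or.inl (hammingNorm_gcwR_of_forall M N hv hM hN))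

variable {M}

lemma le_hammingNorm_gcwR (hM : #M ≠ 0) (hMm : #M < m) (hv : v.1 ≠ 0) :
    2 ^ (m + #N - 1) - 2 ^ (#M + #N - 1) ≤ hammingNorm (gcwR ((deltaC M)ᶜ ×ˢ deltaC N) v) := by
  rcases hammingNorm_gcwR_cases M N hv with h | h | h <;> rw [h]
  · exact two_pow_sub_two_pow_le_mul _ hM hMm
  · exact Nat.sub_le _ _

lemma gcwR_ne_zero (hM : #M ≠ 0) (hMm : #M < m) (hv : v.1 ≠ 0) :
    gcwR ((deltaC M)ᶜ ×ˢ deltaC N) v ≠ 0 := by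
  have hpos : 0 < 2 ^ (m + #N - 1) - 2 ^ (#M + #N - 1) :=
    Nat.sub_pos_of_lt (Nat.pow_lt_pow_right one_lt_two (by omega))
  exact hammingNorm_pos_iff.mp (hpos.trans_le (le_hammingNorm_gcwR N hM hMm hv))

variable {N}

lemma gcwR_selfOrthogonal (hMm : #M < m) (h3 : 3 ≤ #M + #N)
    (v w : (Fin m → ZMod 2) × (Fin m → ZMod 2)) :
    ∑ i, gcwR ((deltaC M)ᶜ ×ˢ deltaC N) v i * gcwR ((deltaC M)ᶜ ×ˢ deltaC N) w i = 0 := by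
  have hlin : (∀ α, ∑ t ∈ (deltaC M)ᶜ, dotp t α = 0) ∨ ∀ α, ∑ t ∈ deltaC N, dotp t α = 0 := by
    by_cases hN : 2 ≤ #N
    · refine Or.inr fun α => sum_dotp _ α ▸ sum_eq_zero fun i _ => ?_
      rw [sum_deltaC_eq_zero_of_dependsOn (by rw [card_singleton]; omega) (dependsOn_apply i),
        zero_mul]
    · refine Or.inl fun α => sum_dotp _ α ▸ sum_eq_zero fun i _ => ?_
      rw [sum_compl_deltaC_eq_zero_of_dependsOn (by rw [card_singleton]; omega)
        (by rw [card_singleton]; omega) (dependsOn_apply i), zero_mul]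
  have hquad : (#(deltaC N) : ZMod 2) * ∑ t ∈ (deltaC M)ᶜ, dotp t v.1 * dotp t w.1 = 0 := by
    rcases eq_or_ne #N 0 with hN | hN
    · refine mul_eq_zero_of_right _ (sum_dotp_mul_dotp _ _ _ ▸ sum_eq_zero fun i _ =>
        sum_eq_zero fun j _ => ?_)
      have hij : #({i, j} : Finset (Fin m)) ≤ 2 := card_le_two
      rw [sum_compl_deltaC_eq_zero_of_dependsOn (by omega) (by omega)
        (dependsOn_apply_mul_apply i j), zero_mul]
    · rw [card_deltaC, Nat.cast_pow, ZMod.natCast_self, zero_pow hN, zero_mul]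
  rw [sum_gcwR_mul_gcwR_product, hquad, zero_add]
  rcases hlin with h | h <;> simp [h]

end Code

theorem stmt_16_general {m : ℕ} (M N : Finset (Fin m))
    (hMu : M ≠ Finset.univ) (hMN : ¬ M ⊆ N)
    (Ds : Finset ((Fin m → ZMod 2) × (Fin m → ZMod 2)))
    (hDs : Ds = (deltaC M)ᶜ ×ˢ deltaC N) :
    (2 * Ds.card = (2 ^ m - 2 ^ M.card) * 2 ^ (N.card + 1)) ∧
    ((Finset.univ : Finset ((Fin m → ZMod 2) × (Fin m → ZMod 2))).image (gcwR Ds)).card = 2 ^ m ∧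
    (∀ v w : (Fin m → ZMod 2) × (Fin m → ZMod 2), ∃ z : (Fin m → ZMod 2) × (Fin m → ZMod 2), gcwR Ds z = gcwR Ds v + gcwR Ds w) ∧
    (∀ v : (Fin m → ZMod 2) × (Fin m → ZMod 2), gcwR Ds v ≠ 0 → 2 ^ (m + N.card - 1) - 2 ^ (M.card + N.card - 1) ≤ hammingNorm (gcwR Ds v)) ∧
    (∃ v : (Fin m → ZMod 2) × (Fin m → ZMod 2), gcwR Ds v ≠ 0 ∧ hammingNorm (gcwR Ds v) = 2 ^ (m + N.card - 1) - 2 ^ (M.card + N.card - 1)) ∧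
    (∀ v : (Fin m → ZMod 2) × (Fin m → ZMod 2), gcwR Ds v ≠ 0 →
        hammingNorm (gcwR Ds v) = (2 ^ m - 2 ^ M.card) * 2 ^ N.card ∨
        hammingNorm (gcwR Ds v) = 2 ^ (m + N.card - 1) ∨
        hammingNorm (gcwR Ds v) = 2 ^ (m + N.card - 1) - 2 ^ (M.card + N.card - 1)) ∧
    (3 ≤ M.card + N.card →
      ∀ v w : (Fin m → ZMod 2) × (Fin m → ZMod 2), ∑ i, gcwR Ds v i * gcwR Ds w i = 0) := by
  subst hDs
  obtain ⟨i₀, hi₀M, hi₀N⟩ := not_subset.mp hMN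
  have hM : #M ≠ 0 := card_ne_zero.mpr ⟨i₀, hi₀M⟩
  have hMm : #M < m := by simpa using card_lt_card (ssubset_univ_iff.mpr hMu)
  have hfst (v : (Fin m → ZMod 2) × (Fin m → ZMod 2))
      (hv : gcwR ((deltaC M)ᶜ ×ˢ deltaC N) v ≠ 0) : v.1 ≠ 0 :=
    fun h => hv (gcwR_eq_zero_of_fst_eq_zero _ h)
  refine ⟨?_, card_image_gcwR _ fun v => gcwR_ne_zero N hM hMm,
    fun v w => ⟨v + w, gcwR_add _ v w⟩, fun v hv => le_hammingNorm_gcwR N hM hMm (hfst v hv),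
    ?_, fun v hv => hammingNorm_gcwR_cases M N (hfst v hv), fun h3 => gcwR_selfOrthogonal hMm h3⟩
  · rw [card_product, card_compl_deltaC, card_deltaC, pow_succ]
    ring
  · have hv : (Pi.single i₀ 1 : Fin m → ZMod 2) i₀ ≠ 0 := by simp
    exact ⟨(Pi.single i₀ 1, 0), gcwR_ne_zero N hM hMm (Function.ne_iff.mpr ⟨i₀, hv⟩),
      hammingNorm_gcwR_of_mem_M M N hi₀M hv fun i hi =>
        Pi.single_eq_of_ne (ne_of_mem_of_not_mem hi hi₀N) 1⟩

theorem stmt_16 {m : ℕ} (hm : 1 ≤ m) (M N : Finset (Fin m))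
    (hMu : M ≠ Finset.univ) (hMN : ¬ M ⊆ N)
    (Ds : Finset ((Fin m → ZMod 2) × (Fin m → ZMod 2)))
    (hDs : Ds = (deltaC M)ᶜ ×ˢ deltaC N) :
    (2 * Ds.card = (2 ^ m - 2 ^ M.card) * 2 ^ (N.card + 1)) ∧
    ((Finset.univ : Finset ((Fin m → ZMod 2) × (Fin m → ZMod 2))).image (gcwR Ds)).card = 2 ^ m ∧
    (∀ v w : (Fin m → ZMod 2) × (Fin m → ZMod 2), ∃ z : (Fin m → ZMod 2) × (Fin m → ZMod 2), gcwR Ds z = gcwR Ds v + gcwR Ds w) ∧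
    (∀ v : (Fin m → ZMod 2) × (Fin m → ZMod 2), gcwR Ds v ≠ 0 → 2 ^ (m + N.card - 1) - 2 ^ (M.card + N.card - 1) ≤ hammingNorm (gcwR Ds v)) ∧
    (∃ v : (Fin m → ZMod 2) × (Fin m → ZMod 2), gcwR Ds v ≠ 0 ∧ hammingNorm (gcwR Ds v) = 2 ^ (m + N.card - 1) - 2 ^ (M.card + N.card - 1)) ∧
    (∀ v : (Fin m → ZMod 2) × (Fin m → ZMod 2), gcwR Ds v ≠ 0 →
        hammingNorm (gcwR Ds v) = (2 ^ m - 2 ^ M.card) * 2 ^ N.card ∨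
        hammingNorm (gcwR Ds v) = 2 ^ (m + N.card - 1) ∨
        hammingNorm (gcwR Ds v) = 2 ^ (m + N.card - 1) - 2 ^ (M.card + N.card - 1)) ∧
    (3 ≤ M.card + N.card →
      ∀ v w : (Fin m → ZMod 2) × (Fin m → ZMod 2), ∑ i, gcwR Ds v i * gcwR Ds w i = 0) :=
  stmt_16_general M N hMu hMN Ds hDs
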